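/- arXiv:2412.01627 — 4 statements merged into one kernel-verified Lean document; each statement's English description precedes it below -/
import Mathlib

section
/- Let Δ be a co-saturated subset of Par(n) (with respect to the dominance order). Suppose M'(Δ) = ℤ·G'(Par(n)∖Δ) + α·I(Δ) is a proper submodule of ℤS(n), and let s be the lexicographically largest element of S(n) not in M'(Δ). Then A(s) ∩ Δ = ∅. -/
open MonoidAlgebra Equiv

/-! ### Robinson–Schensted insertion and shape -/

/-- Schensted row insertion: insert `x` into row `r`, returning new row and bumped entry. -/
def rowInsert (x : ℕ) (r : List ℕ) : List ℕ × Option ℕ :=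
  match r.findIdx? (fun y => decide (x < y)) with
  | none => (r ++ [x], none)
  | some i => (r.set i x, r[i]?)

/-- Insert an entry into a tableau (given as its list of rows). -/
def insertTab : List (List ℕ) → ℕ → List (List ℕ)
  | [], x => [[x]]
  | r :: rs, x =>
    match rowInsert x r with
    | (r', none) => r' :: rs
    | (r', some y) => r' :: insertTab rs y

/-- The Robinson–Schensted insertion tableau of a word. -/
def RSTab (w : List ℕ) : List (List ℕ) := w.foldl insertTab []

/-- The Robinson–Schensted shape of a word, as a multiset of row lengths. -/
def RSshape (w : List ℕ) : Multiset ℕ := ((RSTab w).map List.length : List ℕ)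

/-- The one-line word of a permutation of `Fin n`. -/
def wordOf {n : ℕ} (σ : Equiv.Perm (Fin n)) : List ℕ :=
  (List.finRange n).map fun i => (σ i : ℕ)

/-! ### Partitions, dominance order, conjugation -/

/-- The parts of a multiset, sorted in weakly decreasing order. -/
def descSort (m : Multiset ℕ) : List ℕ := (m.sort (· ≤ ·)).reverse

/-- Dominance order on partitions (as multisets of parts): every partial sum
of the decreasingly sorted parts of `a` is at most that of `b`. -/
def domLE (a b : Multiset ℕ) : Prop :=
  ∀ k : ℕ, ((descSort a).take k).sum ≤ ((descSort b).take k).sum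

/-- A set of partitions of `n` is co-saturated if it is upward closed in dominance order. -/
def CoSaturated {n : ℕ} (Δ : Finset (Nat.Partition n)) : Prop :=
  ∀ μ ∈ Δ, ∀ lam : Nat.Partition n, domLE μ.parts lam.parts → lam ∈ Δ

/-- `Γ` has a unique minimal element in the dominance order. -/
def UniqueMinimal {n : ℕ} (Γ : Finset (Nat.Partition n)) : Prop :=
  ∃! lam, lam ∈ Γ ∧ ∀ μ ∈ Γ, domLE μ.parts lam.parts → μ = lam

/-- `Γ` has a unique maximal element in the dominance order. -/
def UniqueMaximal {n : ℕ} (Γ : Finset (Nat.Partition n)) : Prop :=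
  ∃! lam, lam ∈ Γ ∧ ∀ μ ∈ Γ, domLE lam.parts μ.parts → μ = lam

/-- The conjugate (transpose) of a partition given as a multiset of parts. -/
def conjM (m : Multiset ℕ) : Multiset ℕ :=
  (((List.range m.sum).map (fun k => Multiset.card (m.filter (fun x => k < x)))).filter
    (fun c => decide (0 < c)) : List ℕ)

/-- The set of conjugates of members of `Γ`. -/
noncomputable def conjFinset {n : ℕ} (Γ : Finset (Nat.Partition n)) : Finset (Nat.Partition n) :=
  open Classical in Finset.univ.filter (fun lam => ∃ μ ∈ Γ, conjM μ.parts = lam.parts)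

/-- The decreasingly sorted list of parts of a partition. -/
def descParts {n : ℕ} (lam : Nat.Partition n) : List ℕ := descSort lam.parts

/-! ### Young subgroups and (signed) Young symmetrizers -/

/-- The index of the block (interval of the composition `l`) containing position `i`. -/
def blk (l : List ℕ) (i : ℕ) : ℕ :=
  ((List.range l.length).filter (fun k => decide ((l.take (k+1)).sum ≤ i))).length

/-- `σ` lies in the standard Young subgroup `Sym(lam)`: it preserves each block. -/
def IsYoung {n : ℕ} (lam : Nat.Partition n) (σ : Equiv.Perm (Fin n)) : Prop :=
  ∀ i : Fin n, blk (descParts lam) (σ i) = blk (descParts lam) (i : ℕ)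

instance {n : ℕ} (lam : Nat.Partition n) : DecidablePred (IsYoung lam) := fun σ =>
  decidable_of_iff (∀ i : Fin n, blk (descParts lam) (σ i) = blk (descParts lam) (i : ℕ)) Iff.rfl

/-- `[Sym(lam)]`, the sum in the group algebra of the elements of the Young subgroup. -/
noncomputable def youngSym (R : Type) [CommRing R] {n : ℕ} (lam : Nat.Partition n) :
    MonoidAlgebra R (Equiv.Perm (Fin n)) :=
  ∑ σ ∈ Finset.univ.filter (IsYoung lam), MonoidAlgebra.single σ (1 : R)

/-- The signed Young symmetrizer `Σ_{σ ∈ Sym(lam)} sgn(σ) σ`. -/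
noncomputable def youngSymSgn (R : Type) [CommRing R] {n : ℕ} (lam : Nat.Partition n) :
    MonoidAlgebra R (Equiv.Perm (Fin n)) :=
  ∑ σ ∈ Finset.univ.filter (IsYoung lam), MonoidAlgebra.single σ ((Equiv.Perm.sign σ : ℤ) : R)

/-- The two-sided ideal `I_R(Δ)` generated by the `[Sym(lam)]`, `lam ∈ Δ`,
as an `R`-submodule of the group algebra. -/
noncomputable def symIdeal (R : Type) [CommRing R] {n : ℕ} (Δ : Finset (Nat.Partition n)) :
    Submodule R (MonoidAlgebra R (Equiv.Perm (Fin n))) :=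
  Submodule.span R {x | ∃ lam ∈ Δ, ∃ a b, x = a * youngSym R lam * b}

/-- The two-sided ideal `I_R(Δ)†` generated by the signed Young symmetrizers, `lam ∈ Δ`. -/
noncomputable def sgnIdeal (R : Type) [CommRing R] {n : ℕ} (Δ : Finset (Nat.Partition n)) :
    Submodule R (MonoidAlgebra R (Equiv.Perm (Fin n))) :=
  Submodule.span R {x | ∃ lam ∈ Δ, ∃ a b, x = a * youngSymSgn R lam * b}

/-! ### permutations with prescribed RS shape -/

/-- `G(Γ)`: permutations whose Robinson–Schensted shape lies in `Γ`. -/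
def RSset {n : ℕ} (Γ : Finset (Nat.Partition n)) : Set (Equiv.Perm (Fin n)) :=
  {σ | ∃ lam ∈ Γ, RSshape (wordOf σ) = lam.parts}

/-- The `R`-span of `G(Γ)` inside the group algebra. -/
noncomputable def Gspan (R : Type) [CommRing R] {n : ℕ} (Γ : Finset (Nat.Partition n)) :
    Submodule R (MonoidAlgebra R (Equiv.Perm (Fin n))) :=
  Submodule.span R ((fun σ => MonoidAlgebra.single σ (1 : R)) '' RSset Γ)

/-! ### Greene's sets `A(s)` -/

/-- `s` is (strictly) increasing on the subset `X`. -/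
def IncreasingOn {n : ℕ} (s : Fin n → Fin n) (X : Finset (Fin n)) : Prop :=
  ∀ i ∈ X, ∀ j ∈ X, i < j → s i < s j

/-- `μ ∈ A(s)`: the partition `μ` is upwardly compatible with `s`, i.e. `{1,…,n}` is a
disjoint union of nonempty subsets of sizes the parts of `μ` on each of which `s` increases. -/
def UpComp {n : ℕ} (s : Equiv.Perm (Fin n)) (μ : Nat.Partition n) : Prop :=
  ∃ (m : ℕ) (X : Fin m → Finset (Fin n)),
    (∀ k, (X k).Nonempty) ∧
    (∀ i : Fin n, ∃! k, i ∈ X k) ∧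
    μ.parts = Multiset.map (fun k => (X k).card) Finset.univ.val ∧
    ∀ k, IncreasingOn (⇑s) (X k)

/-! ### standard Young tableaux -/

/-- The cells of the Young diagram of a decreasing list of parts. -/
def cellsF (l : List ℕ) : Finset (ℕ × ℕ) :=
  (Finset.range l.length ×ˢ Finset.range (l.sum + 1)).filter (fun p => p.2 < l.getD p.1 0)

/-- `f_lam`, the number of standard Young tableaux of shape `lam`. -/
noncomputable def numSYT {n : ℕ} (lam : Nat.Partition n) : ℕ :=
  Nat.card {T : cellsF (descParts lam) → Fin n //
    Function.Bijective T ∧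
    ∀ p q : cellsF (descParts lam),
      (p : ℕ × ℕ).1 ≤ (q : ℕ × ℕ).1 → (p : ℕ × ℕ).2 ≤ (q : ℕ × ℕ).2 → p ≠ q → T p < T q}

/-! If `s` is upwardly compatible with `μ ∈ Δ`, some permutation `c` carries the rows of `μ`
onto blocks on each of which `s` increases. Then `(s c) [Sym(μ)] c⁻¹ ∈ I(Δ)` is the sum of the
words `s h` over the stabiliser `H` of these blocks. For `h ∈ H`, `h ≠ 1`, the first position `i`
moved by `h` satisfies `i < h i` within one block, so `s h` is lexicographically larger than `s`
and lies in the module by maximality of `s`; hence so does `s = (s c) [Sym(μ)] c⁻¹ - Σ s h`. -/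

open Finset

theorem Equiv.exists_comp_eq_of_card_fiber_eq {α β γ : Type*} [Fintype α] [Fintype β]
    [DecidableEq γ] {f : α → γ} {g : β → γ} (h : ∀ c, #{a | f a = c} = #{b | g b = c}) :
    ∃ e : α ≃ β, ∀ a, g (e a) = f a :=
  ⟨Equiv.ofFiberEquiv fun c =>
      Fintype.equivOfCardEq (by simpa only [Fintype.card_subtype] using h c),
    Equiv.ofFiberEquiv_map _⟩

theorem blk_eq_card_filter (l : List ℕ) (i : ℕ) :
    blk l i = #{k ∈ range l.length | (l.take (k + 1)).sum ≤ i} :=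
  rfl

theorem blk_eq_of_mem_Ico {l : List ℕ} {i j : ℕ} (h₁ : (l.take j).sum ≤ i)
    (h₂ : i < (l.take (j + 1)).sum) : blk l i = j := by
  have hmono : Monotone fun k => (l.take k).sum := List.monotone_sum_take l
  have hj : j < l.length := by
    by_contra! hj
    rw [List.take_of_length_le hj] at h₁
    rw [List.take_of_length_le (by omega)] at h₂
    omega
  rw [blk_eq_card_filter, ← card_range j]
  congr 1
  ext k
  simp only [mem_filter, mem_range]
  constructor
  · rintro ⟨-, hk⟩
    by_contra! hjk
    have : (l.take (j + 1)).sum ≤ (l.take (k + 1)).sum := hmono (by omega)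
    omega
  · intro hk
    exact ⟨by omega, (hmono hk).trans h₁⟩

theorem blk_eq_iff {l : List ℕ} {i : ℕ} (hi : i < l.sum) (j : ℕ) :
    blk l i = j ↔ (l.take j).sum ≤ i ∧ i < (l.take (j + 1)).sum := by
  refine ⟨?_, fun h => blk_eq_of_mem_Ico h.1 h.2⟩
  have hex : ∃ j, i < (l.take (j + 1)).sum :=
    ⟨l.length, by rwa [List.take_of_length_le (by omega)]⟩
  have hle : (l.take (Nat.find hex)).sum ≤ i := by
    rcases hfind : Nat.find hex with _ | j₀
    · simp
    · exact not_lt.mp (Nat.find_min hex (by omega : j₀ < Nat.find hex))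
  rintro rfl
  rw [blk_eq_of_mem_Ico hle (Nat.find_spec hex)]
  exact ⟨hle, Nat.find_spec hex⟩

theorem card_filter_blk_eq {l : List ℕ} {n : ℕ} (hn : l.sum = n) (j : ℕ) :
    #{i : Fin n | blk l i = j} = l.getD j 0 := by
  have hsum : (l.take (j + 1)).sum ≤ n :=
    hn ▸ (l.take_sublist _).sum_le_sum fun _ _ => Nat.zero_le _
  have hIco : ({i : Fin n | blk l i = j} : Finset (Fin n)).map Fin.valEmbedding =
      Ico (l.take j).sum (l.take (j + 1)).sum := by
    ext k
    simp only [mem_map, mem_filter, mem_univ, true_and, Fin.valEmbedding_apply, mem_Ico]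
    constructor
    · rintro ⟨i, hi, rfl⟩
      exact (blk_eq_iff (hn ▸ i.isLt) j).mp hi
    · intro hk
      exact ⟨⟨k, by omega⟩, blk_eq_of_mem_Ico hk.1 hk.2, rfl⟩
  rw [← card_map, hIco, Nat.card_Ico]
  rcases lt_or_ge j l.length with hj | hj
  · rw [List.sum_take_succ l j hj, List.getD_eq_getElem _ _ hj]
    omega
  · rw [List.take_of_length_le hj, List.take_of_length_le (by omega), List.getD_eq_default _ _ hj]
    omega

theorem wordOf_lt_wordOf_mul {n : ℕ} {s h : Perm (Fin n)} (hh : h ≠ 1)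
    (hs : ∀ i, i < h i → s i < s (h i)) : wordOf s < wordOf (s * h) := by
  have hsupp : h.support.Nonempty := by
    rwa [Finset.nonempty_iff_ne_empty, Ne, Perm.support_eq_empty_iff]
  set i₀ := h.support.min' hsupp
  have hfix : ∀ j < i₀, h j = j := fun j hj =>
    Perm.notMem_support.mp fun hj' => (h.support.min'_le j hj').not_gt hj
  have hmoved : h i₀ ≠ i₀ := Perm.mem_support.mp (h.support.min'_mem hsupp)
  have hlt : i₀ < h i₀ := by
    refine hmoved.lt_or_gt.resolve_left fun hlt => hmoved (h.injective ?_)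
    exact hfix _ hlt
  refine List.lt_iff_exists.mpr (Or.inr ⟨i₀, by simp [wordOf], by simp [wordOf], ?_, ?_⟩)
  · intro j hj
    simp [wordOf, hfix ⟨j, by omega⟩ (Fin.mk_lt_of_lt_val hj)]
  · simpa [wordOf] using hs i₀ hlt

theorem coe_descParts {n : ℕ} (μ : Nat.Partition n) :
    (descParts μ : Multiset ℕ) = μ.parts := by
  rw [descParts, descSort, Multiset.coe_reverse, Multiset.sort_eq]

theorem sum_descParts {n : ℕ} (μ : Nat.Partition n) : (descParts μ).sum = n := by
  rw [← Multiset.sum_coe, coe_descParts, μ.parts_sum]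

theorem Finset.card_filter_eq_count_map {α γ : Type*} [Fintype α] [DecidableEq γ]
    (f : α → γ) (c : γ) : #{a | f a = c} = Multiset.count c (univ.val.map f) := by
  rw [Multiset.count_map, card_def, filter_val]
  simp only [eq_comm]

theorem UpComp.exists_labelling {n : ℕ} {s : Perm (Fin n)} {μ : Nat.Partition n}
    (h : UpComp s μ) :
    ∃ g : Fin n → ℕ, (∀ j, #{x | g x = j} = (descParts μ).getD j 0) ∧
      ∀ x y, g x = g y → x < y → s x < s y := by
  obtain ⟨m, X, -, hXuniq, hXcard, hXinc⟩ := h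
  choose b hb hbuniq using hXuniq
  set l := descParts μ
  have hsizes : univ.val.map (fun k => (X k).card) = univ.val.map l.get := by
    rw [← hXcard, Fin.univ_val_map, List.ofFn_get, coe_descParts]
  obtain ⟨e, he⟩ : ∃ e : Fin m ≃ Fin l.length, ∀ k, l.get (e k) = (X k).card :=
    Equiv.exists_comp_eq_of_card_fiber_eq fun v => by
      rw [card_filter_eq_count_map, card_filter_eq_count_map, hsizes]
  refine ⟨fun x => e (b x), fun j => ?_, fun x y hxy hlt => ?_⟩
  · rcases lt_or_ge j l.length with hj | hj
    · have hfib : ({x | (e (b x) : ℕ) = j} : Finset (Fin n)) = X (e.symm ⟨j, hj⟩) := by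
        ext x
        simp only [mem_filter, mem_univ, true_and]
        constructor
        · intro hx
          have hbx : b x = e.symm ⟨j, hj⟩ := e.eq_symm_apply.mpr (Fin.ext hx)
          exact hbx ▸ hb x
        · intro hx
          rw [← hbuniq x _ hx, Equiv.apply_symm_apply]
      rw [hfib, ← he, List.getD_eq_getElem _ _ hj, Equiv.apply_symm_apply, List.get_eq_getElem]
    · rw [List.getD_eq_default _ _ hj, card_eq_zero, filter_eq_empty_iff]
      exact fun x _ => ((e (b x)).isLt.trans_le hj).ne
  · have hbxy : b x = b y := e.injective (Fin.ext hxy)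
    exact hXinc (b x) x (hb x) y (hbxy ▸ hb y) hlt

theorem exists_conj_isYoung_iff {n : ℕ} (μ : Nat.Partition n) {g : Fin n → ℕ}
    (hg : ∀ j, #{x | g x = j} = (descParts μ).getD j 0) :
    ∃ c : Perm (Fin n), ∀ σ, IsYoung μ σ ↔ ∀ x, g ((c * σ * c⁻¹) x) = g x := by
  obtain ⟨c, hc⟩ := Equiv.exists_comp_eq_of_card_fiber_eq
    (f := fun i : Fin n => blk (descParts μ) i) (g := g)
    fun j => by rw [card_filter_blk_eq (sum_descParts μ), hg]
  refine ⟨c, fun σ => ?_⟩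
  rw [IsYoung, c.surjective.forall (p := fun x => g ((c * σ * c⁻¹) x) = g x)]
  simp [hc]

theorem single_mul_youngSym_mul_single (R : Type) [CommRing R] {n : ℕ} {μ : Nat.Partition n}
    {c : Perm (Fin n)} {p : Perm (Fin n) → Prop} [DecidablePred p]
    (hc : ∀ σ, IsYoung μ σ ↔ p (c * σ * c⁻¹)) (s : Perm (Fin n)) :
    single (s * c) 1 * youngSym R μ * single c⁻¹ 1 =
      ∑ h ∈ univ.filter p, single (s * h) (1 : R) := by
  rw [youngSym, mul_sum, sum_mul]
  refine sum_equiv (MulAut.conj c).toEquiv (fun σ => by simp [hc]) fun σ _ => ?_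
  simp [single_mul_single, mul_assoc]

theorem largest_missing_word_not_upComp_general {n : ℕ} (Δ : Finset (Nat.Partition n))
    (s : Equiv.Perm (Fin n))
    (hs : MonoidAlgebra.single s (1 : ℤ) ∉ Gspan ℤ (Finset.univ \ Δ) ⊔ symIdeal ℤ Δ)
    (hmax : ∀ t : Equiv.Perm (Fin n), List.Lex (· < ·) (wordOf s) (wordOf t) →
      MonoidAlgebra.single t (1 : ℤ) ∈ Gspan ℤ (Finset.univ \ Δ) ⊔ symIdeal ℤ Δ) :
    ∀ μ ∈ Δ, ¬ UpComp s μ := by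
  intro μ hμ hup
  obtain ⟨g, hg, hinc⟩ := hup.exists_labelling
  obtain ⟨c, hc⟩ := exists_conj_isYoung_iff μ hg
  set M := Gspan ℤ (Finset.univ \ Δ) ⊔ symIdeal ℤ Δ
  set H : Finset (Perm (Fin n)) := univ.filter fun h => ∀ x, g (h x) = g x
  have hsum : ∑ h ∈ H, single (s * h) (1 : ℤ) ∈ M := by
    rw [← single_mul_youngSym_mul_single ℤ hc s]
    exact Submodule.mem_sup_right (Submodule.subset_span ⟨μ, hμ, _, _, rfl⟩)
  have hrest : ∀ h ∈ H.erase 1, single (s * h) (1 : ℤ) ∈ M := fun h hh => by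
    obtain ⟨hne, hH⟩ := mem_erase.mp hh
    exact hmax _ (wordOf_lt_wordOf_mul hne fun i hi => hinc _ _ ((mem_filter.mp hH).2 i).symm hi)
  have h1 : (1 : Perm (Fin n)) ∈ H := by simp [H]
  rw [← sum_erase_add H _ h1, mul_one] at hsum
  exact hs (by simpa using M.sub_mem hsum (M.sum_mem hrest))

theorem largest_missing_word_not_upComp {n : ℕ} (Δ : Finset (Nat.Partition n))
    (hΔ : CoSaturated Δ) (s : Equiv.Perm (Fin n))
    (hs : MonoidAlgebra.single s (1 : ℤ) ∉ Gspan ℤ (Finset.univ \ Δ) ⊔ symIdeal ℤ Δ)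
    (hmax : ∀ t : Equiv.Perm (Fin n), List.Lex (· < ·) (wordOf s) (wordOf t) →
      MonoidAlgebra.single t (1 : ℤ) ∈ Gspan ℤ (Finset.univ \ Δ) ⊔ symIdeal ℤ Δ) :
    ∀ μ ∈ Δ, ¬ UpComp s μ :=
  largest_missing_word_not_upComp_general Δ s hs hmax
end

section
/- Let n, r be positive integers with r > n, and let R be a commutative ring. The annihilator in RSym(r) of the r-fold tensor power V^{⊗r} of a free R-module V of rank n (with Sym(r) acting by place permutations) is the two-sided ideal generated by the single element Σ_{σ∈Sym(X)} sgn(σ)σ, where X is any subset of {1,...,r} of size n+1. If r ≤ n the annihilator is zero. -/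
open MonoidAlgebra Equiv

open scoped TensorProduct

/-- The place-permutation representation of `Sym(r)` on the `r`-fold tensor power of `V`. -/
noncomputable def tensorRep (R : Type) [CommRing R] (V : Type) [AddCommGroup V] [Module R V]
    (r : ℕ) : Representation R (Equiv.Perm (Fin r)) (⨂[R] (_ : Fin r), V) where
  toFun σ := (PiTensorProduct.reindex R (fun _ : Fin r => V) σ).toLinearMap
  map_one' :=
    congrArg LinearEquiv.toLinearMap
      (PiTensorProduct.reindex_refl (R := R) (s := fun _ : Fin r => V))
  map_mul' := fun σ τ =>
    (congrArg LinearEquiv.toLinearMap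
      (PiTensorProduct.reindex_trans (e := τ) (e' := σ) (R := R) (s := fun _ : Fin r => V))).symm

/-- `Σ_{σ ∈ Sym(X)} sgn(σ) σ` for a subset `X` of `{1,…,r}`. -/
noncomputable def sgnSymOn (R : Type) [CommRing R] {r : ℕ} (X : Finset (Fin r)) :
    MonoidAlgebra R (Equiv.Perm (Fin r)) :=
  ∑ σ ∈ Finset.univ.filter (fun σ : Equiv.Perm (Fin r) => ∀ i ∉ X, σ i = i),
    MonoidAlgebra.single σ ((Equiv.Perm.sign σ : ℤ) : R)


/-!
On a basis tensor, two of the `n + 1` positions in `X` carry the same basis vector, and the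
transposition exchanging them pairs off the terms of `sgnSymOn R X` with opposite signs; so the
ideal generated by `sgnSymOn R X` annihilates `V^{⊗r}`.

Conversely, modulo this ideal every permutation can be straightened into a combination of
permutations with no decreasing subsequence of length `n + 1`: a decreasing subsequence on
positions `Y` rewrites `σ`, through `σ * sgnSymOn R Y`, in terms of the lexicographically smaller
permutations `σ * τ`, `1 ≠ τ ∈ Sym(Y)`. For a permutation `σ` without such a subsequence the
depth `d(p)` (one less than the length of the longest decreasing subsequence ending at `p`) is
below `n`, so `d` labels a basis tensor `e_d`; since `σ` increases on each level set of `d`, it is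
the lexicographically least permutation sending `e_d` to `e_{d ∘ σ⁻¹}`. Reading off that
coordinate for the lexicographically largest `σ` in the support of an element of the kernel
shows that these permutations act linearly independently. For `r ≤ n` every permutation is of
this kind.
-/

namespace Equiv.Perm

variable {r : ℕ}

def HasDecreasingSubseq (k : ℕ) (σ : Perm (Fin r)) : Prop :=
  ∃ f : Fin k → Fin r, StrictMono f ∧ StrictAnti (σ ∘ f)

def HasDecreasingSubseqEndingAt (σ : Perm (Fin r)) (p : Fin r) (m : ℕ) : Prop :=
  ∃ f : Fin (m + 1) → Fin r, StrictMono f ∧ StrictAnti (σ ∘ f) ∧ f (Fin.last m) = p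

namespace HasDecreasingSubseqEndingAt

variable {σ : Perm (Fin r)} {p q : Fin r} {m : ℕ}

theorem zero (σ : Perm (Fin r)) (p : Fin r) : HasDecreasingSubseqEndingAt σ p 0 :=
  ⟨fun _ => p, Subsingleton.strictMono (α := Fin 1) _, Subsingleton.strictAnti (α := Fin 1) _,
    rfl⟩

theorem snoc (h : HasDecreasingSubseqEndingAt σ p m) (hpq : p < q) (hσ : σ q < σ p) :
    HasDecreasingSubseqEndingAt σ q (m + 1) := by
  obtain ⟨f, hf, hσf, rfl⟩ := h
  refine ⟨Fin.snoc f q, ?_, ?_, Fin.snoc_last _ _⟩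
  · rw [Fin.strictMono_iff_lt_succ] at hf ⊢
    intro i
    obtain ⟨i, rfl⟩ | rfl := i.eq_castSucc_or_eq_last
    · rw [Fin.succ_castSucc, Fin.snoc_castSucc, Fin.snoc_castSucc]
      exact hf i
    · simpa using hpq
  · rw [Fin.strictAnti_iff_succ_lt] at hσf ⊢
    intro i
    obtain ⟨i, rfl⟩ | rfl := i.eq_castSucc_or_eq_last
    · simp only [Function.comp_apply]
      rw [Fin.succ_castSucc, Fin.snoc_castSucc, Fin.snoc_castSucc]
      exact hσf i
    · simpa using hσ

theorem lt_card (h : HasDecreasingSubseqEndingAt σ p m) : m < r := by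
  obtain ⟨f, hf, -⟩ := h
  simpa using Fintype.card_le_of_injective f hf.injective

end HasDecreasingSubseqEndingAt

open Classical in
/-- The length, minus one, of the longest decreasing subsequence of `σ` ending at `p`. -/
noncomputable def decreasingDepth (σ : Perm (Fin r)) (p : Fin r) : ℕ :=
  Nat.findGreatest (HasDecreasingSubseqEndingAt σ p) r

variable {σ : Perm (Fin r)} {n : ℕ}

theorem hasDecreasingSubseqEndingAt_decreasingDepth (σ : Perm (Fin r)) (p : Fin r) :
    HasDecreasingSubseqEndingAt σ p (decreasingDepth σ p) := by
  classical
  exact Nat.findGreatest_spec (Nat.zero_le r) (.zero σ p)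

theorem HasDecreasingSubseqEndingAt.le_decreasingDepth {p : Fin r} {m : ℕ}
    (h : HasDecreasingSubseqEndingAt σ p m) : m ≤ decreasingDepth σ p := by
  classical
  exact Nat.le_findGreatest h.lt_card.le h

theorem decreasingDepth_lt (hσ : ¬ HasDecreasingSubseq (n + 1) σ) (p : Fin r) :
    decreasingDepth σ p < n := by
  by_contra! hn
  obtain ⟨f, hf, hσf, -⟩ := hasDecreasingSubseqEndingAt_decreasingDepth σ p
  exact hσ ⟨f ∘ Fin.castLE (by omega), hf.comp (Fin.strictMono_castLE _),
    hσf.comp_strictMono (Fin.strictMono_castLE _)⟩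

theorem apply_lt_apply_of_decreasingDepth_eq {p q : Fin r} (hpq : p < q)
    (h : decreasingDepth σ p = decreasingDepth σ q) : σ p < σ q := by
  refine (σ.injective.ne hpq.ne).lt_or_gt.resolve_right fun hσ => ?_
  have := ((hasDecreasingSubseqEndingAt_decreasingDepth σ p).snoc hpq hσ).le_decreasingDepth
  omega

theorem not_hasDecreasingSubseq_of_le (hr : r ≤ n) (σ : Perm (Fin r)) :
    ¬ HasDecreasingSubseq (n + 1) σ := fun ⟨f, hf, _⟩ => by
  have := Fintype.card_le_of_injective f hf.injective
  simp only [Fintype.card_fin] at this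
  omega

theorem exists_lt_apply_of_ne_one {ρ : Perm (Fin r)} (hρ : ρ ≠ 1) :
    ∃ p, p < ρ p ∧ ∀ q < p, ρ q = q := by
  obtain ⟨p, hp, hmin⟩ := wellFounded_lt.has_min {p | ρ p ≠ p}
    (by simpa [Set.Nonempty, Equiv.Perm.ext_iff] using hρ)
  have hfix : ∀ q < p, ρ q = q := fun q hq => by_contra fun hq' => hmin q hq' hq
  refine ⟨p, (Ne.symm hp).lt_or_gt.resolve_right fun hlt => hp ?_, hfix⟩
  exact ρ.injective (hfix _ hlt)

theorem toLex_lt_of_decreasingDepth_comp_symm_eq {σ τ : Perm (Fin r)} (hne : τ ≠ σ)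
    (h : decreasingDepth σ ∘ τ.symm = decreasingDepth σ ∘ σ.symm) :
    toLex ⇑σ < toLex ⇑τ := by
  set ρ := σ⁻¹ * τ
  have hτ : τ = σ * ρ := by simp [ρ]
  obtain ⟨p, hp, hfix⟩ :=
    exists_lt_apply_of_ne_one (ρ := ρ) (by simpa [ρ, inv_mul_eq_one] using hne.symm)
  have hdepth : decreasingDepth σ (ρ p) = decreasingDepth σ p := by
    simpa [ρ] using (congrFun h (τ p)).symm
  rw [hτ]
  exact ⟨p, fun q hq => by simp [hfix q hq],
    apply_lt_apply_of_decreasingDepth_eq hp hdepth.symm⟩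

theorem toLex_mul_lt_of_forall_notMem_range {k : ℕ} {σ τ : Perm (Fin r)} {f : Fin k → Fin r}
    (hf : StrictMono f) (hσf : StrictAnti (σ ∘ f)) (hτ : ∀ p ∉ Set.range f, τ p = p)
    (hτ1 : τ ≠ 1) : toLex ⇑(σ * τ) < toLex ⇑σ := by
  obtain ⟨p, hp, hfix⟩ := exists_lt_apply_of_ne_one hτ1
  have hmoved : ∀ q, τ q ≠ q → q ∈ Set.range f := fun q hq =>
    by_contra fun h => hq (hτ q h)
  obtain ⟨a, ha⟩ := hmoved p hp.ne'
  obtain ⟨b, hb⟩ := hmoved (τ p) fun h => hp.ne' (τ.injective h)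
  have hab : a < b := hf.lt_iff_lt.1 (by rwa [ha, hb])
  refine ⟨p, fun q hq => by simp [hfix q hq], ?_⟩
  simpa [ha, hb] using hσf hab

end Equiv.Perm

section TwoSidedSpan

variable {R A : Type*} [CommSemiring R] [Semiring A] [Algebra R A]

theorem mul_mul_mem_span_mul_mul {s u : A}
    (hu : u ∈ Submodule.span R {x | ∃ a b, x = a * s * b}) (y z : A) :
    y * u * z ∈ Submodule.span R {x | ∃ a b, x = a * s * b} := by
  induction hu using Submodule.span_induction with
  | mem w hw =>
    obtain ⟨a, b, rfl⟩ := hw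
    exact Submodule.subset_span ⟨y * a, b * z, by simp only [mul_assoc]⟩
  | zero => simp
  | add u w _ _ hu hw => simpa [mul_add, add_mul] using Submodule.add_mem _ hu hw
  | smul c u _ hu => simpa [mul_smul_comm, smul_mul_assoc] using Submodule.smul_mem _ c hu

theorem span_mul_mul_le_ker {B : Type*} [Semiring B] [Algebra R B] (f : A →ₐ[R] B) {s : A}
    (hs : f s = 0) :
    Submodule.span R {x | ∃ a b, x = a * s * b} ≤ LinearMap.ker f.toLinearMap := by
  rw [Submodule.span_le]
  rintro _ ⟨a, b, rfl⟩
  simp [hs]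

end TwoSidedSpan

section Straightening

open Equiv.Perm Pointwise

variable (R : Type) [CommRing R] {n r : ℕ}

theorem single_mul_sgnSymOn_mul_single_inv (g : Perm (Fin r)) (X : Finset (Fin r)) :
    single g (1 : R) * sgnSymOn R X * single g⁻¹ 1 = sgnSymOn R (g • X) := by
  rw [sgnSymOn, sgnSymOn, Finset.mul_sum, Finset.sum_mul]
  refine Finset.sum_bij' (fun τ _ => g * τ * g⁻¹) (fun τ _ => g⁻¹ * τ * g) ?_ ?_ ?_ ?_ ?_
  · simp only [Finset.mem_filter, Finset.mem_univ, true_and]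
    intro τ hτ p hp
    have : g⁻¹ p ∉ X := fun h => hp (by simpa using Finset.smul_mem_smul_finset (a := g) h)
    rw [Perm.mul_apply, Perm.mul_apply, hτ _ this]
    simp
  · simp only [Finset.mem_filter, Finset.mem_univ, true_and]
    intro τ hτ p hp
    have : g p ∉ g • X := fun h =>
      hp (by simpa using Finset.smul_mem_smul_finset (a := g⁻¹) h)
    simp [hτ _ this]
  · intro τ _; simp [mul_assoc]
  · intro τ _; simp [mul_assoc]
  · intro τ _
    simp [single_mul_single, Perm.sign_mul, mul_right_comm]

theorem sgnSymOn_mem_span_of_card_eq {X Y : Finset (Fin r)} (hXY : X.card = Y.card) :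
    sgnSymOn R Y ∈ Submodule.span R {x | ∃ a b, x = a * sgnSymOn R X * b} := by
  obtain ⟨g, hg⟩ :=
    (Set.powersetCard.isPretransitive (α := Fin r) (n := X.card)).exists_smul_eq
      ⟨X, rfl⟩ ⟨Y, hXY.symm⟩
  have hgXY : g • X = Y := by simpa using congrArg Subtype.val hg
  rw [← hgXY, ← single_mul_sgnSymOn_mul_single_inv]
  exact Submodule.subset_span ⟨_, _, rfl⟩

theorem single_mem_span_sup_supported {X : Finset (Fin r)} (hX : X.card = n + 1)
    (σ : Perm (Fin r)) :
    single σ (1 : R) ∈ Submodule.span R {x | ∃ a b, x = a * sgnSymOn R X * b} ⊔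
      supported R R {σ : Perm (Fin r) | ¬ σ.HasDecreasingSubseq (n + 1)} := by
  classical
  induction σ using (InvImage.wf (fun σ : Perm (Fin r) => toLex ⇑σ) wellFounded_lt).induction
    with | _ σ ih => ?_
  by_cases hσ : σ.HasDecreasingSubseq (n + 1)
  swap
  · rw [supported_eq_span_single]
    exact Submodule.mem_sup_right (Submodule.subset_span ⟨σ, hσ, rfl⟩)
  obtain ⟨f, hf, hσf⟩ := hσ
  set Y := Finset.univ.image f
  set S := Finset.univ.filter fun τ : Perm (Fin r) => ∀ i ∉ Y, τ i = i
  have hY : sgnSymOn R Y ∈ Submodule.span R {x | ∃ a b, x = a * sgnSymOn R X * b} :=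
    sgnSymOn_mem_span_of_card_eq R
      (by simp [Y, Finset.card_image_of_injective _ hf.injective, hX])
  have hexpand : single σ (1 : R) * sgnSymOn R Y =
      single σ 1 + ∑ τ ∈ S.erase 1, ((sign τ : ℤ) : R) • single (σ * τ) 1 := by
    rw [sgnSymOn, Finset.mul_sum,
      ← Finset.add_sum_erase _ _ (by simp [S] : (1 : Perm (Fin r)) ∈ S)]
    simp [single_mul_single]
  have hlower : ∀ τ ∈ S.erase 1, single (σ * τ) (1 : R) ∈
      Submodule.span R {x | ∃ a b, x = a * sgnSymOn R X * b} ⊔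
        supported R R {σ : Perm (Fin r) | ¬ σ.HasDecreasingSubseq (n + 1)} := by
    intro τ hτ
    refine ih _ (toLex_mul_lt_of_forall_notMem_range hf hσf (fun p hp => ?_)
      (Finset.ne_of_mem_erase hτ))
    exact (Finset.mem_filter.1 (Finset.mem_of_mem_erase hτ)).2 p (by simpa [Y] using hp)
  rw [eq_sub_of_add_eq hexpand.symm]
  refine Submodule.sub_mem _ (Submodule.mem_sup_left ?_)
    (Submodule.sum_mem _ fun τ hτ => Submodule.smul_mem _ _ (hlower τ hτ))
  simpa using mul_mul_mem_span_mul_mul hY (single σ 1) 1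

theorem span_sup_supported_eq_top {X : Finset (Fin r)} (hX : X.card = n + 1) :
    Submodule.span R {x | ∃ a b, x = a * sgnSymOn R X * b} ⊔
      supported R R {σ : Perm (Fin r) | ¬ σ.HasDecreasingSubseq (n + 1)} = ⊤ := by
  rw [eq_top_iff]
  rintro a -
  induction a using MonoidAlgebra.induction_linear with
  | zero => exact Submodule.zero_mem _
  | add a b ha hb => exact Submodule.add_mem _ ha hb
  | single σ c => simpa [smul_single'] using
      Submodule.smul_mem _ c (single_mem_span_sup_supported R hX σ)

end Straightening

section TensorPower

open Equiv.Perm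

variable {R : Type} [CommRing R] {V : Type} [AddCommGroup V] [Module R V] {ι : Type*}
  {r : ℕ}

theorem tensorRep_piTensorProduct_basis (b : Module.Basis ι R V) (σ : Perm (Fin r))
    (i : Fin r → ι) :
    tensorRep R V r σ (Basis.piTensorProduct (fun _ => b) i) =
      Basis.piTensorProduct (fun _ => b) (i ∘ σ.symm) := by
  rw [Basis.piTensorProduct_apply, Basis.piTensorProduct_apply]
  exact PiTensorProduct.reindex_tprod σ _

theorem asAlgebraHom_tensorRep_piTensorProduct_basis (b : Module.Basis ι R V)
    (a : MonoidAlgebra R (Perm (Fin r))) (i : Fin r → ι) :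
    (tensorRep R V r).asAlgebraHom a (Basis.piTensorProduct (fun _ => b) i) =
      ∑ σ, a.coeff σ • Basis.piTensorProduct (fun _ => b) (i ∘ σ.symm) := by
  induction a using MonoidAlgebra.induction_linear with
  | zero => simp
  | add a a' ha ha' =>
    rw [map_add, LinearMap.add_apply, ha, ha', ← Finset.sum_add_distrib]
    simp only [coeff_add, Finsupp.add_apply, add_smul]
  | single σ c =>
    classical
    rw [Representation.asAlgebraHom_single, LinearMap.smul_apply,
      tensorRep_piTensorProduct_basis, Finset.sum_eq_single σ]
    · simp
    · intro τ _ hτ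
      simp [coeff_single, Ne.symm hτ]
    · simp

theorem sum_coeff_eq_zero_of_mem_ker [DecidableEq ι] (b : Module.Basis ι R V)
    {a : MonoidAlgebra R (Perm (Fin r))}
    (ha : a ∈ LinearMap.ker (tensorRep R V r).asAlgebraHom.toLinearMap) (i j : Fin r → ι) :
    ∑ σ ∈ Finset.univ.filter (fun σ : Perm (Fin r) => i ∘ σ.symm = j), a.coeff σ = 0 := by
  have h := LinearMap.congr_fun (LinearMap.mem_ker.1 ha) (Basis.piTensorProduct (fun _ => b) i)
  rw [AlgHom.toLinearMap_apply, asAlgebraHom_tensorRep_piTensorProduct_basis] at h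
  have hj := congrArg (fun v => (Basis.piTensorProduct (fun _ => b)).repr v j) h
  simp only [map_sum, map_smul, Module.Basis.repr_self, LinearMap.zero_apply, map_zero,
    Finsupp.coe_finsetSum, Finset.sum_apply, Finsupp.smul_apply, Finsupp.zero_apply,
    Finsupp.single_apply, smul_eq_mul, mul_ite, mul_one, mul_zero] at hj
  rwa [Finset.sum_filter]

theorem asAlgebraHom_tensorRep_sgnSymOn [Fintype ι] (b : Module.Basis ι R V)
    {X : Finset (Fin r)} (hX : Fintype.card ι < X.card) :
    (tensorRep R V r).asAlgebraHom (sgnSymOn R X) = 0 := by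
  classical
  refine (Basis.piTensorProduct fun _ => b).ext fun i => ?_
  obtain ⟨x, hx, y, hy, hxy, hixy⟩ := Finset.exists_ne_map_eq_of_card_lt_of_maps_to
    (t := Finset.univ) (by simpa using hX) (fun p _ => Finset.mem_univ (i p))
  have hswap : i ∘ ⇑(swap x y) = i := by
    rw [Equiv.comp_swap_eq_update, hixy, Function.update_eq_self, ← hixy, Function.update_eq_self]
  rw [sgnSymOn, map_sum, LinearMap.sum_apply, LinearMap.zero_apply]
  refine Finset.sum_involution (fun σ _ => σ * swap x y) (fun σ _ => ?_) (fun σ _ _ => ?_)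
    (fun σ hσ => ?_) (fun σ _ => by simp [mul_assoc])
  · have hσ : i ∘ ⇑(σ * swap x y).symm = i ∘ ⇑σ.symm := by
      rw [← Perm.inv_def, mul_inv_rev, swap_inv, Perm.coe_mul, ← Function.comp_assoc, hswap,
        Perm.inv_def]
    simp only [Representation.asAlgebraHom_single, LinearMap.smul_apply,
      tensorRep_piTensorProduct_basis, hσ, Perm.sign_mul, sign_swap hxy]
    simp
  · simpa [← Perm.one_def, swap_eq_refl_iff] using hxy
  · simp only [Finset.mem_filter, Finset.mem_univ, true_and] at hσ ⊢
    intro p hp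
    rw [Perm.mul_apply, swap_apply_of_ne_of_ne (by rintro rfl; exact hp hx)
      (by rintro rfl; exact hp hy), hσ p hp]

end TensorPower

open Equiv.Perm in
theorem eq_zero_of_mem_ker_of_mem_supported (R : Type) [CommRing R] {n r : ℕ}
    {a : MonoidAlgebra R (Perm (Fin r))}
    (ha : a ∈ LinearMap.ker (tensorRep R (Fin n → R) r).asAlgebraHom.toLinearMap)
    (hsupp : a ∈ supported R R {σ : Perm (Fin r) | ¬ σ.HasDecreasingSubseq (n + 1)}) :
    a = 0 := by
  classical
  by_contra ha0
  obtain ⟨σ, hσ, hmax⟩ := a.coeff.support.exists_max_image (fun σ => toLex ⇑σ)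
    (Finsupp.support_nonempty_iff.2 (mt coeff_eq_zero.1 ha0))
  have hσn : ¬ σ.HasDecreasingSubseq (n + 1) := mem_supported.1 hsupp hσ
  let depth : Fin r → Fin n := fun p => ⟨decreasingDepth σ p, decreasingDepth_lt hσn p⟩
  have hsum := sum_coeff_eq_zero_of_mem_ker (Pi.basisFun R (Fin n)) ha depth (depth ∘ σ.symm)
  rw [Finset.sum_eq_single σ (fun τ hτ hτσ => ?_) (by simp)] at hsum
  · exact Finsupp.mem_support_iff.1 hσ hsum
  have hlt := toLex_lt_of_decreasingDepth_comp_symm_eq hτσ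
    (funext fun p => congrArg Fin.val (congrFun (Finset.mem_filter.1 hτ).2 p))
  exact Finsupp.notMem_support_iff.1 fun hτ' => (hmax τ hτ').not_gt hlt

theorem annihilator_tensor_power_general (R : Type) [CommRing R] (n r : ℕ) :
    (∀ X : Finset (Fin r), X.card = n + 1 → n < r →
      LinearMap.ker (tensorRep R (Fin n → R) r).asAlgebraHom.toLinearMap =
        Submodule.span R {x | ∃ a b, x = a * sgnSymOn R X * b}) ∧
    (r ≤ n → LinearMap.ker (tensorRep R (Fin n → R) r).asAlgebraHom.toLinearMap = ⊥) := by
  refine ⟨fun X hX _ => ?_, fun hrn => ?_⟩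
  · have hI : Submodule.span R {x | ∃ a b, x = a * sgnSymOn R X * b} ≤
        LinearMap.ker (tensorRep R (Fin n → R) r).asAlgebraHom.toLinearMap :=
      span_mul_mul_le_ker _ (asAlgebraHom_tensorRep_sgnSymOn (Pi.basisFun R (Fin n))
        (by simp [hX]))
    refine le_antisymm (fun a ha => ?_) hI
    obtain ⟨u, hu, m, hm, rfl⟩ :=
      Submodule.mem_sup.1 ((span_sup_supported_eq_top R hX).symm ▸ Submodule.mem_top : a ∈ _)
    have hmker : m ∈ LinearMap.ker (tensorRep R (Fin n → R) r).asAlgebraHom.toLinearMap := by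
      simpa using Submodule.sub_mem _ ha (hI hu)
    simpa [eq_zero_of_mem_ker_of_mem_supported R hmker hm] using hu
  · refine (Submodule.eq_bot_iff _).2 fun a ha => eq_zero_of_mem_ker_of_mem_supported R ha ?_
    rw [mem_supported']
    exact fun σ hσ => absurd (Equiv.Perm.not_hasDecreasingSubseq_of_le hrn σ) hσ

theorem annihilator_tensor_power (R : Type) [CommRing R] (n r : ℕ) (hn : 0 < n) (hr : 0 < r) :
    (∀ X : Finset (Fin r), X.card = n + 1 → n < r →
      LinearMap.ker (tensorRep R (Fin n → R) r).asAlgebraHom.toLinearMap =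
        Submodule.span R {x | ∃ a b, x = a * sgnSymOn R X * b}) ∧
    (r ≤ n → LinearMap.ker (tensorRep R (Fin n → R) r).asAlgebraHom.toLinearMap = ⊥) :=
  annihilator_tensor_power_general R n r
end

section
/- Let n > r ≥ 1, R a commutative ring, and J the kernel of the action of RSym(n) on R·I(n,r) (functions {1,...,r}→{1,...,n} with Sym(n) acting by postcomposition). Then RSym(n)/J is free as an R-module with basis σ + J, where σ ranges over permutations of {1,...,n} whose one-line word contains a strictly increasing subsequence of length n − r. -/
open MonoidAlgebra Equiv

/-- The action of `Sym(n)` on `I(n,r)`, the maps `{1,…,r} → {1,…,n}`, by postcomposition. -/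
instance postcompAction (n r : ℕ) : MulAction (Equiv.Perm (Fin n)) (Fin r → Fin n) where
  smul σ i := ⇑σ ∘ i
  one_smul i := rfl
  mul_smul σ τ i := rfl

/-- The permutation representation of `Sym(n)` on `R·I(n,r)`. -/
noncomputable def dotyRep (R : Type) [CommRing R] (n r : ℕ) :
    Representation R (Equiv.Perm (Fin n)) ((Fin r → Fin n) →₀ R) :=
  { toFun := fun g => Finsupp.lmapDomain R R (g • ·)
    map_one' := by ext; simp
    map_mul' := fun x y => by ext; simp [mul_smul] }


/-! Both halves are triangularity arguments for the lexicographic order on one-line words.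
Spanning: if `σ` has no increasing subsequence of length `n - r`, patience sorting splits its
positions into fewer than `n - r` decreasing chains. The signed sum over the permutations
preserving the value sets of these chains kills `R·I(n,r)`, because every `i ∈ I(n,r)` misses two
values of one chain and their transposition fixes `i`; all terms `τσ` of that sum other than `σ`
are lexicographically smaller than `σ`.
Independence: let `m` be the lexicographically largest permutation in the support of `x ∈ J`,
increasing on a set `C` of `n - r` positions, and apply `x` to the map `i` enumerating the
complement of `C`. The coefficient of `m ∘ i` is a sum over the permutations agreeing with `m`
off `C`, and all of these except `m` are lexicographically larger than `m`. -/

section PermLex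

variable {α β : Type*} [LinearOrder α] [WellFoundedLT α]

theorem Equiv.Perm.toLex_lt_of_strictMonoOn {σ τ : Perm α} {C : Set α} (hτ : StrictMonoOn τ C)
    (hσ : ∀ p ∉ C, σ p = τ p) (hne : σ ≠ τ) : toLex ⇑τ < toLex ⇑σ := by
  refine lt_of_le_of_ne (not_lt.1 ?_) (toLex.injective.ne (DFunLike.coe_injective.ne hne.symm))
  rintro ⟨p, hbefore, hp⟩
  have hpC : p ∈ C := by_contra fun h => hp.ne (hσ p h)
  set q := τ.symm (σ p)
  have hq : τ q = σ p := τ.apply_symm_apply _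
  have hqC : q ∈ C := by_contra fun h => h (σ.injective ((hσ q h).trans hq) ▸ hpC)
  have hqp : q < p := (hτ.lt_iff_lt hqC hpC).1 (hq ▸ hp)
  exact hqp.ne (σ.injective ((hbefore q hqp).trans hq))

theorem Equiv.Perm.toLex_lt_of_strictAntiOn_fibres {σ ρ : Perm α} (c : α → β)
    (hσ : ∀ p q, p < q → c p = c q → σ q < σ p) (hρ : ∀ p, c (σ.symm (ρ p)) = c p)
    (hne : ρ ≠ σ) : toLex ⇑ρ < toLex ⇑σ := by
  refine lt_of_le_of_ne (not_lt.1 ?_) (toLex.injective.ne (DFunLike.coe_injective.ne hne))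
  rintro ⟨p, hbefore, hp⟩
  set q := σ.symm (ρ p)
  have hq : σ q = ρ p := σ.apply_symm_apply _
  rcases lt_trichotomy q p with h | h | h
  · exact h.ne (ρ.injective ((hbefore q h).symm.trans hq))
  · exact hp.ne (h ▸ hq)
  · exact (hσ p q h (hρ p).symm).not_gt (hq ▸ hp)

end PermLex

section IncreasingSubseq

variable {ι α : Type*} [LinearOrder ι] [LinearOrder α]

def HasIncreasingSubseq (s : ι → α) (k : ℕ) : Prop :=
  ∃ f : Fin k → ι, StrictMono f ∧ StrictMono (fun j => s (f j))

theorem hasIncreasingSubseq_of_strictMonoOn {s : ι → α} {T : Finset ι} {k : ℕ}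
    (hT : StrictMonoOn s T) (hk : k ≤ T.card) : HasIncreasingSubseq s k := by
  obtain ⟨T', hT'T, hT'⟩ := Finset.exists_subset_card_eq hk
  let f := T'.orderEmbOfFin hT'
  refine ⟨f, f.strictMono, fun a b hab => hT ?_ ?_ (f.strictMono hab)⟩
  · exact hT'T (T'.orderEmbOfFin_mem hT' a)
  · exact hT'T (T'.orderEmbOfFin_mem hT' b)

variable [Fintype ι]

/-- Patience sorting: `c p + 1` is the length of a longest increasing subsequence ending at `p`. -/
theorem exists_antitoneOn_fibres_of_not_hasIncreasingSubseq {s : ι → α} {k : ℕ}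
    (h : ¬ HasIncreasingSubseq s k) :
    ∃ c : ι → Fin (k - 1), ∀ p q, p < q → c p = c q → s q ≤ s p := by
  classical
  let chains (p : ι) : Finset (Finset ι) :=
    Finset.univ.filter fun T => StrictMonoOn s T ∧ p ∈ T ∧ ∀ q ∈ T, q ≤ p
  let len (p : ι) : ℕ := (chains p).sup Finset.card
  have hsingleton (p : ι) : {p} ∈ chains p := by simp [chains]
  have hlen_pos (p : ι) : 1 ≤ len p := Finset.le_sup (f := Finset.card) (hsingleton p)
  have hlen_lt (p : ι) : len p < k := by
    obtain ⟨T, hT, hTlen⟩ : ∃ T ∈ chains p, len p = T.card :=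
      Finset.exists_mem_eq_sup _ ⟨_, hsingleton p⟩ Finset.card
    by_contra! hk
    exact h (hasIncreasingSubseq_of_strictMonoOn (Finset.mem_filter.1 hT).2.1 (hTlen ▸ hk))
  have hlen_mono {p q : ι} (hpq : p < q) (hs : s p < s q) : len p < len q := by
    obtain ⟨T, hT, hTlen⟩ : ∃ T ∈ chains p, len p = T.card :=
      Finset.exists_mem_eq_sup _ ⟨_, hsingleton p⟩ Finset.card
    obtain ⟨hTmono, hpT, hTp⟩ := (Finset.mem_filter.1 hT).2
    have hqT : q ∉ T := fun hq => (hTp q hq).not_gt hpq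
    have hlt (a : ι) (ha : a ∈ T) : a < q ∧ s a < s q :=
      ⟨(hTp a ha).trans_lt hpq, (hTmono.monotoneOn ha hpT (hTp a ha)).trans_lt hs⟩
    have hins : insert q T ∈ chains q := by
      refine Finset.mem_filter.2 ⟨Finset.mem_univ _, ?_, Finset.mem_insert_self q T, ?_⟩
      · rw [Finset.coe_insert, strictMonoOn_insert_iff_of_forall_le fun a ha => (hlt a ha).1.le]
        exact ⟨fun a ha _ => (hlt a ha).2, hTmono⟩
      · exact (Finset.forall_mem_insert _ _ _).2 ⟨le_rfl, fun a ha => (hlt a ha).1.le⟩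
    calc len p < (insert q T).card := by rw [Finset.card_insert_of_notMem hqT, hTlen]; omega
      _ ≤ len q := Finset.le_sup (f := Finset.card) hins
  refine ⟨fun p => ⟨len p - 1, by have := hlen_lt p; have := hlen_pos p; omega⟩, ?_⟩
  intro p q hpq hc
  have hlen : len p = len q := by
    have := hlen_pos p; have := hlen_pos q; simp only [Fin.mk.injEq] at hc; omega
  exact not_lt.1 fun hs => (hlen_mono hpq hs).ne hlen

end IncreasingSubseq

theorem Representation.sum_zsmul_apply_eq_zero_of_fixed {R G V : Type*} [CommSemiring R]
    [Group G] [AddCommGroup V] [Module R V] (ρ : Representation R G V) (χ : G →* ℤˣ) {K : Finset G}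
    {t : G} (hK : ∀ g ∈ K, g * t ∈ K) (htt : t * t = 1) (ht : χ t = -1) {v : V}
    (hv : ρ t v = v) : ∑ g ∈ K, (χ g : ℤ) • ρ g v = 0 := by
  have ht1 : t ≠ 1 := fun h => by simp [h] at ht
  refine Finset.sum_involution (fun g _ => g * t) (fun g _ => ?_) (fun g _ _ => ?_)
    (fun g hg => hK g hg) (fun g _ => by rw [mul_assoc, htt, mul_one])
  · rw [map_mul, ht, map_mul, Module.End.mul_apply, hv]
    simp
  · simpa using ht1

section Doty

variable (R : Type) [CommRing R] {n r : ℕ}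

noncomputable abbrev dotyKernel (R : Type) [CommRing R] (n r : ℕ) :
    Submodule R (MonoidAlgebra R (Perm (Fin n))) :=
  LinearMap.ker (dotyRep R n r).asAlgebraHom.toLinearMap

theorem dotyRep_single (g : Perm (Fin n)) (i : Fin r → Fin n) (a : R) :
    dotyRep R n r g (Finsupp.single i a) = Finsupp.single (⇑g ∘ i) a :=
  Finsupp.mapDomain_single

theorem mul_mem_dotyKernel {x : MonoidAlgebra R (Perm (Fin n))} (hx : x ∈ dotyKernel R n r)
    (y : MonoidAlgebra R (Perm (Fin n))) : x * y ∈ dotyKernel R n r := by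
  simp only [LinearMap.mem_ker, AlgHom.toLinearMap_apply, map_mul] at hx ⊢
  rw [hx, zero_mul]

noncomputable def signedStabilizerSum {β : Type*} [DecidableEq β] (b : Fin n → β) :
    MonoidAlgebra R (Perm (Fin n)) :=
  ∑ τ ∈ Finset.univ.filter (fun τ : Perm (Fin n) => ∀ w, b (τ w) = b w),
    MonoidAlgebra.single τ ((Perm.sign τ : ℤ) : R)

/-- Any `i ∈ I(n,r)` misses at least `n - r` points, two of which lie in the same block of `b`;
their transposition fixes `i`, stabilizes `b` and is odd. -/
theorem signedStabilizerSum_mem_dotyKernel {m : ℕ} (b : Fin n → Fin m) (hm : m + r < n) :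
    signedStabilizerSum R b ∈ dotyKernel R n r := by
  classical
  refine LinearMap.mem_ker.2 (Finsupp.lhom_ext fun i a => ?_)
  have hcard : (Finset.univ : Finset (Fin m)).card < (Finset.univ.image i)ᶜ.card := by
    have := Finset.card_image_le (s := Finset.univ) (f := i)
    simp only [Finset.card_compl, Finset.card_univ, Fintype.card_fin] at this ⊢
    omega
  obtain ⟨w₁, hw₁, w₂, hw₂, hne, hb⟩ := Finset.exists_ne_map_eq_of_card_lt_of_maps_to hcard
    (f := b) (fun _ _ => Finset.mem_coe.2 (Finset.mem_univ _))
  have hfix (k : Fin r) : swap w₁ w₂ (i k) = i k := by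
    simp only [Finset.mem_compl, Finset.mem_image, Finset.mem_univ, true_and,
      not_exists] at hw₁ hw₂
    exact swap_apply_of_ne_of_ne (hw₁ k) (hw₂ k)
  have hswap (w : Fin n) : b (swap w₁ w₂ w) = b w := by
    rcases eq_or_ne w w₁ with rfl | h₁
    · rw [swap_apply_left, hb]
    rcases eq_or_ne w w₂ with rfl | h₂
    · rw [swap_apply_right, hb]
    rw [swap_apply_of_ne_of_ne h₁ h₂]
  simp only [signedStabilizerSum, map_sum, LinearMap.sum_apply, AlgHom.toLinearMap_apply,
    Representation.asAlgebraHom_single, LinearMap.smul_apply, Int.cast_smul_eq_zsmul,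
    LinearMap.zero_apply]
  refine (dotyRep R n r).sum_zsmul_apply_eq_zero_of_fixed Perm.sign (fun g hg => ?_)
    (swap_mul_self w₁ w₂) (Perm.sign_swap hne) ?_
  · simp only [Finset.mem_filter, Finset.mem_univ, true_and, Perm.mul_apply] at hg ⊢
    exact fun w => (hg _).trans (hswap w)
  · rw [dotyRep_single]
    exact congrArg (Finsupp.single · a) (funext hfix)


theorem signedStabilizerSum_mul_single {β : Type*} [DecidableEq β] (b : Fin n → β)
    (σ : Perm (Fin n)) (a : R) :
    signedStabilizerSum R b * MonoidAlgebra.single σ a = MonoidAlgebra.single σ a +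
      ∑ τ ∈ (Finset.univ.filter fun τ : Perm (Fin n) => ∀ w, b (τ w) = b w).erase 1,
        MonoidAlgebra.single (τ * σ) ((Perm.sign τ : ℤ) * a) := by
  have h1 : (1 : Perm (Fin n)) ∈ Finset.univ.filter fun τ : Perm (Fin n) => ∀ w, b (τ w) = b w :=
    Finset.mem_filter.2 ⟨Finset.mem_univ _, fun _ => rfl⟩
  rw [signedStabilizerSum, Finset.sum_mul, ← Finset.add_sum_erase _ _ h1]
  simp [MonoidAlgebra.single_mul_single]

noncomputable def increasingCoset (R : Type) [CommRing R] (n r : ℕ) :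
    {σ : Perm (Fin n) // HasIncreasingSubseq σ (n - r)} →
      MonoidAlgebra R (Perm (Fin n)) ⧸ dotyKernel R n r :=
  fun σ => Submodule.Quotient.mk (MonoidAlgebra.single σ.1 1)

theorem mk_single_mem_span_increasingCoset (hnr : r < n) (σ : Perm (Fin n)) (a : R) :
    Submodule.Quotient.mk (MonoidAlgebra.single σ a) ∈
      Submodule.span R (Set.range (increasingCoset R n r)) := by
  classical
  induction σ using (InvImage.wf (fun σ : Perm (Fin n) => toLex ⇑σ) wellFounded_lt).induction
    generalizing a with
  | _ σ ih =>
  by_cases hσ : HasIncreasingSubseq σ (n - r)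
  · rw [← mul_one a, ← smul_eq_mul, ← MonoidAlgebra.smul_single, Submodule.Quotient.mk_smul]
    exact Submodule.smul_mem _ a (Submodule.subset_span ⟨⟨σ, hσ⟩, rfl⟩)
  obtain ⟨c, hc⟩ := exists_antitoneOn_fibres_of_not_hasIncreasingSubseq hσ
  have hdec (p q : Fin n) (hpq : p < q) (hcpq : c p = c q) : σ q < σ p :=
    (hc p q hpq hcpq).lt_of_ne (σ.injective.ne hpq.ne')
  have hker : signedStabilizerSum R (c ∘ σ.symm) * MonoidAlgebra.single σ a ∈
      dotyKernel R n r :=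
    mul_mem_dotyKernel R (signedStabilizerSum_mem_dotyKernel R _ (by omega)) _
  rw [signedStabilizerSum_mul_single, ← sub_neg_eq_add, ← Submodule.Quotient.eq] at hker
  rw [hker, ← Submodule.mkQ_apply, map_neg, map_sum]
  refine Submodule.neg_mem _ (Submodule.sum_mem _ fun τ hτ => ih _ ?_ _)
  obtain ⟨hτ1, hτ⟩ := Finset.mem_erase.1 hτ
  refine Perm.toLex_lt_of_strictAntiOn_fibres c hdec (fun p => ?_) (by simpa using hτ1)
  simpa using (Finset.mem_filter.1 hτ).2 (σ p)

theorem top_le_span_increasingCoset (hnr : r < n) :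
    ⊤ ≤ Submodule.span R (Set.range (increasingCoset R n r)) := by
  rintro z -
  obtain ⟨x, rfl⟩ := Submodule.Quotient.mk_surjective _ z
  induction x using MonoidAlgebra.induction_linear with
  | zero => exact Submodule.zero_mem _
  | add x y hx hy => exact Submodule.add_mem _ hx hy
  | single σ a => exact mk_single_mem_span_increasingCoset R hnr σ a

theorem asAlgebraHom_dotyRep_single (g : Perm (Fin n)) (c : R) (i : Fin r → Fin n) (a : R) :
    (dotyRep R n r).asAlgebraHom (MonoidAlgebra.single g c) (Finsupp.single i a) =
      Finsupp.single (⇑g ∘ i) (c * a) := by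
  rw [Representation.asAlgebraHom_single, LinearMap.smul_apply, dotyRep_single,
    Finsupp.smul_single, smul_eq_mul]

theorem exists_ne_comp_eq_of_mem_dotyKernel {x : MonoidAlgebra R (Perm (Fin n))}
    (hx : x ∈ dotyKernel R n r) {m : Perm (Fin n)} (hm : m ∈ x.coeff.support)
    (i : Fin r → Fin n) : ∃ τ ∈ x.coeff.support, τ ≠ m ∧ ⇑τ ∘ i = ⇑m ∘ i := by
  classical
  by_contra! h
  have hzero := congrArg (fun f => f (Finsupp.single i 1) (⇑m ∘ i)) (LinearMap.mem_ker.1 hx)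
  rw [← MonoidAlgebra.sum_coeff_single x] at hzero
  simp only [Finsupp.sum, map_sum, AlgHom.toLinearMap_apply, LinearMap.sum_apply,
    asAlgebraHom_dotyRep_single, mul_one, Finsupp.finsetSum_apply, LinearMap.zero_apply,
    Finsupp.coe_zero, Pi.zero_apply] at hzero
  rw [Finset.sum_eq_single m (fun τ hτ hτm => Finsupp.single_eq_of_ne (h τ hτ hτm).symm)
    (fun hm' => absurd hm hm'), Finsupp.single_eq_same] at hzero
  exact Finsupp.mem_support_iff.1 hm hzero

theorem eq_zero_of_mem_dotyKernel_of_mem_supported (hnr : r < n)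
    {x : MonoidAlgebra R (Perm (Fin n))} (hx : x ∈ dotyKernel R n r)
    (hsupp : x ∈ MonoidAlgebra.supported R R {σ : Perm (Fin n) | HasIncreasingSubseq σ (n - r)}) :
    x = 0 := by
  classical
  by_contra hx0
  have hne : x.coeff.support.Nonempty :=
    Finsupp.support_nonempty_iff.2 fun h => hx0 (MonoidAlgebra.coeff_injective h)
  obtain ⟨m, hm, hmax⟩ := x.coeff.support.exists_max_image (fun σ => toLex ⇑σ) hne
  obtain ⟨f, hf, hmf⟩ := hsupp hm
  set C := Finset.univ.image f
  have hC : Cᶜ.card = r := by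
    rw [Finset.card_compl, Finset.card_image_of_injective _ hf.injective]
    simp only [Finset.card_univ, Fintype.card_fin]
    omega
  let e := Cᶜ.equivFinOfCardEq hC
  obtain ⟨τ, hτ, hτm, hτe⟩ :=
    exists_ne_comp_eq_of_mem_dotyKernel R hx hm fun k => (e.symm k : Fin n)
  have hmC : StrictMonoOn m C := by
    rintro _ hp _ hq hpq
    obtain ⟨a, -, rfl⟩ := Finset.mem_image.1 hp
    obtain ⟨b, -, rfl⟩ := Finset.mem_image.1 hq
    exact hmf (hf.lt_iff_lt.1 hpq)
  have hτC (p : Fin n) (hp : p ∉ (C : Set (Fin n))) : τ p = m p := by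
    simpa [e] using congrFun hτe (e ⟨p, Finset.mem_compl.2 hp⟩)
  exact (hmax τ hτ).not_gt (Perm.toLex_lt_of_strictMonoOn hmC hτC hτm)

theorem linearIndependent_increasingCoset (hnr : r < n) :
    LinearIndependent R (increasingCoset R n r) := by
  have hv : LinearIndependent R fun σ : {σ : Perm (Fin n) // HasIncreasingSubseq σ (n - r)} =>
      MonoidAlgebra.single σ.1 (1 : R) := by
    simpa [Function.comp_def] using
      (MonoidAlgebra.basis _ R).linearIndependent.comp Subtype.val Subtype.val_injective
  refine hv.map (f := (dotyKernel R n r).mkQ) ?_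
  rw [Submodule.ker_mkQ, Submodule.disjoint_def]
  refine fun x hx hxJ => eq_zero_of_mem_dotyKernel_of_mem_supported R hnr hxJ ?_
  refine Submodule.span_le.2 ?_ hx
  rintro _ ⟨σ, rfl⟩
  refine MonoidAlgebra.mem_supported.2 fun τ hτ => ?_
  rw [Finset.mem_singleton.1 (Finsupp.support_single_subset hτ)]
  exact σ.2

end Doty

theorem doty_basis_of_quotient_general (R : Type) [CommRing R] (n r : ℕ) (hnr : r < n) :
    ∃ b : Module.Basis {σ : Equiv.Perm (Fin n) //
        ∃ f : Fin (n - r) → Fin n, StrictMono f ∧ StrictMono (fun k => σ (f k))} R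
        (MonoidAlgebra R (Equiv.Perm (Fin n)) ⧸
          LinearMap.ker (dotyRep R n r).asAlgebraHom.toLinearMap),
      ∀ σ, b σ =
        Submodule.Quotient.mk (MonoidAlgebra.single (σ : Equiv.Perm (Fin n)) (1 : R)) :=
  ⟨.mk (linearIndependent_increasingCoset R hnr) (top_le_span_increasingCoset R hnr),
    fun _ => Module.Basis.mk_apply _ _ _⟩

theorem doty_basis_of_quotient (R : Type) [CommRing R] (n r : ℕ) (hr : 0 < r) (hnr : r < n) :
    ∃ b : Module.Basis {σ : Equiv.Perm (Fin n) //
        ∃ f : Fin (n - r) → Fin n, StrictMono f ∧ StrictMono (fun k => σ (f k))} R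
        (MonoidAlgebra R (Equiv.Perm (Fin n)) ⧸
          LinearMap.ker (dotyRep R n r).asAlgebraHom.toLinearMap),
      ∀ σ, b σ =
        Submodule.Quotient.mk (MonoidAlgebra.single (σ : Equiv.Perm (Fin n)) (1 : R)) :=
  doty_basis_of_quotient_general R n r hnr
end

section
/- For r ≤ n, the map ψ: FSym(r) → the (ω,ω)-weight space of A(n,r), defined by ψ(σ) = c_{u, uσ} where u = (1,2,...,r) ∈ I(n,r), is an isomorphism of FSym(r)-bimodules. -/
open MonoidAlgebra Equiv

/-- The monomial `∏_k X_{(f k, k)}` (indices included into `Fin n`): these monomials are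
exactly the bideterminant-free normal forms of the `c_{u,uσ}`, with `c_{u,uσ}` corresponding
to `f = σ⁻¹`. -/
noncomputable def omegaMon (F : Type) [Field F] (n r : ℕ) (h : r ≤ n)
    (f : Equiv.Perm (Fin r)) : MvPolynomial (Fin n × Fin n) F :=
  ∏ k : Fin r, MvPolynomial.X (Fin.castLE h (f k), Fin.castLE h k)

/-- The `(ω,ω)`-weight space of `A(n,r)`: the span of the `c_{u,uσ}`. -/
noncomputable def omegaWt (F : Type) [Field F] (n r : ℕ) (h : r ≤ n) :
    Submodule F (MvPolynomial (Fin n × Fin n) F) :=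
  Submodule.span F (Set.range (omegaMon F n r h))

/-- The equivalence between `Fin r` and the initial segment of `Fin n`. -/
def finEquivLT {n r : ℕ} (h : r ≤ n) : Fin r ≃ {x : Fin n // (x : ℕ) < r} where
  toFun k := ⟨Fin.castLE h k, k.2⟩
  invFun x := ⟨(x.1 : ℕ), x.2⟩
  left_inv k := rfl
  right_inv x := rfl

/-- Extend a permutation of `{1,…,r}` to a permutation of `{1,…,n}` fixing the rest. -/
def extPerm {n r : ℕ} (h : r ≤ n) (τ : Equiv.Perm (Fin r)) : Equiv.Perm (Fin n) :=
  τ.extendDomain (finEquivLT h)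

/-
The monomials `c_{u,uσ}` are distinct, hence linearly independent, so `σ ↦ c_{u,uσ}` is a
linear isomorphism `FSym(r) → ^ωA(n,r)^ω`. Acting on the column (resp. row) indices by a
permutation of `{1,…,r}` permutes these monomials exactly as left (resp. right) multiplication
permutes the group elements, which gives the bimodule structure.
-/

namespace MonoidAlgebra

variable {k G M : Type*} [CommSemiring k] [Monoid G] [AddCommMonoid M] [Module k M]

theorem apply_single_mul_eq_of_apply_single {ψ : MonoidAlgebra k G →ₗ[k] M} {L : M →ₗ[k] M}
    {τ : G} (hψ : ∀ σ, ψ (single (τ * σ) 1) = L (ψ (single σ 1)))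
    (x : MonoidAlgebra k G) :
    ψ (single τ 1 * x) = L (ψ x) := by
  have : ψ ∘ₗ LinearMap.mulLeft k (single τ 1) = L ∘ₗ ψ :=
    (MonoidAlgebra.basis G k).ext fun σ => by simp [single_mul_single, hψ]
  exact LinearMap.congr_fun this x

theorem apply_mul_single_eq_of_apply_single {ψ : MonoidAlgebra k G →ₗ[k] M} {L : M →ₗ[k] M}
    {τ : G} (hψ : ∀ σ, ψ (single (σ * τ) 1) = L (ψ (single σ 1)))
    (x : MonoidAlgebra k G) :
    ψ (x * single τ 1) = L (ψ x) := by
  have : ψ ∘ₗ LinearMap.mulRight k (single τ 1) = L ∘ₗ ψ :=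
    (MonoidAlgebra.basis G k).ext fun σ => by simp [single_mul_single, hψ]
  exact LinearMap.congr_fun this x

end MonoidAlgebra

namespace MvPolynomial

variable {R σ ι α : Type*} [CommSemiring R] [Fintype ι]

theorem sum_single_graph_apply [DecidableEq α] {g : α × ι → σ} (hg : Function.Injective g)
    (f : ι → α) (a : α) (k : ι) :
    (∑ j, Finsupp.single (g (f j, j)) 1 : σ →₀ ℕ) (g (a, k)) =
      if f k = a then 1 else 0 := by
  classical
  rw [Finsupp.finsetSum_apply, Finset.sum_eq_single k]
  · simp [Finsupp.single_apply, hg.eq_iff, eq_comm]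
  · intro j _ hj
    simp [hg.eq_iff, hj]
  · simp

theorem linearIndependent_prod_X_graph {g : α × ι → σ} (hg : Function.Injective g) :
    LinearIndependent R fun f : ι → α => ∏ k, (X (g (f k, k)) : MvPolynomial σ R) := by
  have hexp : Function.Injective fun f : ι → α => ∑ k, Finsupp.single (g (f k, k)) 1 := by
    intro f f' hff'
    funext k
    classical
    simpa [sum_single_graph_apply hg, eq_comm] using congr($hff' (g (f k, k)))
  convert (basisMonomials σ R).linearIndependent.comp _ hexp using 1
  funext f
  simp [coe_basisMonomials, monomial_sum_one, X]

end MvPolynomial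

section WeightSpace

variable (F : Type) [Field F] {n r : ℕ} (h : r ≤ n)

theorem extPerm_castLE (τ : Equiv.Perm (Fin r)) (k : Fin r) :
    extPerm h τ (Fin.castLE h k) = Fin.castLE h (τ k) :=
  Equiv.Perm.extendDomain_apply_image τ (finEquivLT h) k

theorem extPerm_inv (τ : Equiv.Perm (Fin r)) : (extPerm h τ)⁻¹ = extPerm h τ⁻¹ :=
  (Equiv.Perm.extendDomain_inv τ (finEquivLT h)).symm

theorem linearIndependent_omegaMon : LinearIndependent F (omegaMon F n r h) :=
  (MvPolynomial.linearIndependent_prod_X_graph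
    (g := Prod.map (Fin.castLE h) (Fin.castLE h))
    ((Fin.castLE_injective h).prodMap (Fin.castLE_injective h))).comp _ DFunLike.coe_injective

theorem rename_map_extPerm_omegaMon (τ f : Equiv.Perm (Fin r)) :
    MvPolynomial.rename (Prod.map (extPerm h τ) id) (omegaMon F n r h f) =
      omegaMon F n r h (τ * f) := by
  simp [omegaMon, extPerm_castLE]

theorem rename_map_id_extPerm_omegaMon (τ f : Equiv.Perm (Fin r)) :
    MvPolynomial.rename (Prod.map id (extPerm h τ)) (omegaMon F n r h f) =
      omegaMon F n r h (f * τ⁻¹) := by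
  simp only [omegaMon, map_prod, MvPolynomial.rename_X, Prod.map, id, extPerm_castLE]
  exact Fintype.prod_equiv τ _ _ fun k => by simp

noncomputable def omegaBasis : Module.Basis (Equiv.Perm (Fin r)) F (omegaWt F n r h) :=
  .span (linearIndependent_omegaMon F h)

theorem omegaBasis_apply (f : Equiv.Perm (Fin r)) :
    (omegaBasis F h f : MvPolynomial (Fin n × Fin n) F) = omegaMon F n r h f :=
  congr($(Module.Basis.span_apply (linearIndependent_omegaMon F h) f).1)

noncomputable def omegaWtEquiv : MonoidAlgebra F (Equiv.Perm (Fin r)) ≃ₗ[F] omegaWt F n r h :=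
  (MonoidAlgebra.basis _ F).equiv (omegaBasis F h) (Equiv.inv _)

theorem omegaWtEquiv_single (σ : Equiv.Perm (Fin r)) :
    (omegaWtEquiv F h (single σ 1) : MvPolynomial (Fin n × Fin n) F) =
      omegaMon F n r h σ⁻¹ := by
  rw [← MonoidAlgebra.basis_apply, omegaWtEquiv, Module.Basis.equiv_apply]
  exact omegaBasis_apply F h σ⁻¹

theorem omegaWtEquiv_single_mul (τ : Equiv.Perm (Fin r))
    (x : MonoidAlgebra F (Equiv.Perm (Fin r))) :
    (omegaWtEquiv F h (single τ 1 * x) : MvPolynomial (Fin n × Fin n) F) =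
      MvPolynomial.rename (Prod.map id (extPerm h τ))
        (omegaWtEquiv F h x : MvPolynomial (Fin n × Fin n) F) :=
  MonoidAlgebra.apply_single_mul_eq_of_apply_single
    (ψ := (omegaWt F n r h).subtype ∘ₗ (omegaWtEquiv F h).toLinearMap)
    (L := (MvPolynomial.rename _).toLinearMap)
    (fun σ => by simp [omegaWtEquiv_single, rename_map_id_extPerm_omegaMon]) x

theorem omegaWtEquiv_mul_single (τ : Equiv.Perm (Fin r))
    (x : MonoidAlgebra F (Equiv.Perm (Fin r))) :
    (omegaWtEquiv F h (x * single τ 1) : MvPolynomial (Fin n × Fin n) F) =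
      MvPolynomial.rename (Prod.map (extPerm h τ⁻¹) id)
        (omegaWtEquiv F h x : MvPolynomial (Fin n × Fin n) F) :=
  MonoidAlgebra.apply_mul_single_eq_of_apply_single
    (ψ := (omegaWt F n r h).subtype ∘ₗ (omegaWtEquiv F h).toLinearMap)
    (L := (MvPolynomial.rename _).toLinearMap)
    (fun σ => by simp [omegaWtEquiv_single, rename_map_extPerm_omegaMon]) x

end WeightSpace

theorem weight_space_bimodule_iso (F : Type) [Field F] (n r : ℕ) (h : r ≤ n) :
    ∃ ψ : MonoidAlgebra F (Equiv.Perm (Fin r)) ≃ₗ[F] omegaWt F n r h,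
      (∀ σ : Equiv.Perm (Fin r),
        (ψ (MonoidAlgebra.single σ (1 : F)) : MvPolynomial (Fin n × Fin n) F) =
          omegaMon F n r h σ⁻¹) ∧
      (∀ (τ : Equiv.Perm (Fin r)) (x : MonoidAlgebra F (Equiv.Perm (Fin r))),
        (ψ (MonoidAlgebra.single τ (1 : F) * x) : MvPolynomial (Fin n × Fin n) F) =
          MvPolynomial.rename (fun p => (p.1, extPerm h τ p.2))
            (ψ x : MvPolynomial (Fin n × Fin n) F)) ∧
      (∀ (τ : Equiv.Perm (Fin r)) (x : MonoidAlgebra F (Equiv.Perm (Fin r))),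
        (ψ (x * MonoidAlgebra.single τ (1 : F)) : MvPolynomial (Fin n × Fin n) F) =
          MvPolynomial.rename (fun p => ((extPerm h τ)⁻¹ p.1, p.2))
            (ψ x : MvPolynomial (Fin n × Fin n) F)) := by
  refine ⟨omegaWtEquiv F h, omegaWtEquiv_single F h, omegaWtEquiv_single_mul F h, ?_⟩
  intro τ x
  rw [extPerm_inv]
  exact omegaWtEquiv_mul_single F h τ x
end
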